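/- Let G be a finite connected block graph with at least two blocks. Then the set of special vertices of G is exactly D1 ∪ D2, no special vertex of G has a true twin other than itself, and hence D1 ∪ D2 is the unique S(G)-set of G; where D1 is the set of cut-vertices that are the unique cut-vertex of some block of G, and D2 is the set of cut-vertices having at least two neighbors which are not cut-vertices and which belong to different blocks of G. -/

import Mathlib

open SimpleGraph

namespace TotalDom

variable {V : Type*}

/-- The closed neighborhood `N[v]` of a vertex. -/
def cnbr (G : SimpleGraph V) (v : V) : Set V := insert v (G.neighborSet v)

/-- `S` is a dominating set: every vertex outside `S` has a neighbor in `S`. -/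
def IsDomSet (G : SimpleGraph V) (S : Set V) : Prop := ∀ v ∉ S, ∃ u ∈ S, G.Adj u v

/-- `S` is a total dominating set: every vertex has a neighbor in `S`. -/
def IsTotalDomSet (G : SimpleGraph V) (S : Set V) : Prop := ∀ v : V, ∃ u ∈ S, G.Adj u v

/-- The domination number `γ(G)`. -/
noncomputable def domNum (G : SimpleGraph V) : ℕ :=
  sInf {n | ∃ S : Set V, IsDomSet G S ∧ S.ncard = n}

/-- The total domination number `γₜ(G)`. -/
noncomputable def totalDomNum (G : SimpleGraph V) : ℕ :=
  sInf {n | ∃ S : Set V, IsTotalDomSet G S ∧ S.ncard = n}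

/-- A minimum dominating set (γ-set). -/
def IsMinDomSet (G : SimpleGraph V) (S : Set V) : Prop := IsDomSet G S ∧ S.ncard = domNum G

/-- `S` is a packing: closed neighborhoods of distinct members are disjoint. -/
def IsPacking (G : SimpleGraph V) (S : Set V) : Prop :=
  S.Pairwise fun u v => Disjoint (cnbr G u) (cnbr G v)

/-- `M(v)`: neighbors of `v` having a neighbor outside `N[v]`. -/
def Mset (G : SimpleGraph V) (v : V) : Set V :=
  {u | G.Adj v u ∧ ∃ w, G.Adj u w ∧ w ∉ cnbr G v}

/-- `D(v)`: neighbors `u` of `v` that are not true twins of `v` with `N[u] ⊆ N[v]`. -/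
def Dset (G : SimpleGraph V) (v : V) : Set V :=
  {u | G.Adj v u ∧ cnbr G u ≠ cnbr G v ∧ cnbr G u ⊆ cnbr G v}

/-- `T(v)`: `v` together with its true twins. -/
def Tset (G : SimpleGraph V) (v : V) : Set V := {u | cnbr G u = cnbr G v}

/-- A non-isolated vertex `v` is special if no `u ∈ M(v)` satisfies `D(v) ⊆ N(u)`. -/
def Special (G : SimpleGraph V) (v : V) : Prop :=
  (G.neighborSet v).Nonempty ∧ ¬ ∃ u ∈ Mset G v, Dset G v ⊆ G.neighborSet u

/-- An `S(G)`-set: a set of special vertices containing exactly one vertex from each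
true-twin equivalence class of special vertices. -/
def IsSGSet (G : SimpleGraph V) (S : Set V) : Prop :=
  (∀ u ∈ S, Special G u) ∧ ∀ v, Special G v → ∃! u, u ∈ S ∧ u ∈ Tset G v

/-- `G` has no isolated vertices. -/
def NoIsolated (G : SimpleGraph V) : Prop := ∀ v : V, ∃ u, G.Adj v u

/-- `G` contains no induced copy of `H`. -/
def Free {α : Type*} (H : SimpleGraph α) (G : SimpleGraph V) : Prop := IsEmpty (H ↪g G)

/-- `H₁`: a 6-cycle plus one chord between vertices at distance two along the cycle. -/
def H1 : SimpleGraph (Fin 6) := cycleGraph 6 ⊔ fromEdgeSet {s(0, 2)}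

/-- `H₂`: a 6-cycle `x₁x₂x₃x₄x₅x₆` plus the chords `x₂x₆` and `x₃x₅`. -/
def H2 : SimpleGraph (Fin 6) := cycleGraph 6 ⊔ fromEdgeSet {s(1, 5), s(2, 4)}

/-- A leaf: a vertex of degree one. -/
def IsLeaf (G : SimpleGraph V) (v : V) : Prop := ∃! u, G.Adj v u

/-- A support vertex: a vertex adjacent to a leaf. -/
def IsSupport (G : SimpleGraph V) (v : V) : Prop := ∃ u, G.Adj v u ∧ IsLeaf G u

/-- `sup(G)`: the set of support vertices. -/
def supSet (G : SimpleGraph V) : Set V := {v | IsSupport G v}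

/-- `v` is a cut-vertex: deleting `v` disconnects `G`. -/
def IsCutVertex (G : SimpleGraph V) (v : V) : Prop :=
  ¬ (G.induce ({v}ᶜ : Set V)).Preconnected

/-- The subgraph of `G` induced on `B` has no cut-vertex of its own. -/
def NoCutVertexWithin (G : SimpleGraph V) (B : Set V) : Prop :=
  ∀ v ∈ B, (B \ {v}).Nonempty → (G.induce (B \ {v})).Connected

/-- `B` is a block of `G`: a maximal vertex set inducing a connected subgraph without a
cut-vertex (a maximal 2-connected subgraph or a `K₂`). -/
def IsBlock (G : SimpleGraph V) (B : Set V) : Prop :=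
  (B.Nonempty ∧ (G.induce B).Connected ∧ NoCutVertexWithin G B) ∧
    ∀ B' : Set V, B'.Nonempty → (G.induce B').Connected → NoCutVertexWithin G B' →
      B ⊆ B' → B = B'

/-- `G` is a block graph: every block of `G` is complete. -/
def IsBlockGraph (G : SimpleGraph V) : Prop :=
  ∀ B : Set V, IsBlock G B → ∀ u ∈ B, ∀ v ∈ B, u ≠ v → G.Adj u v

/-- `D₁`: the cut-vertices that constitute the unique cut-vertex in some block of `G`. -/
def D1set (G : SimpleGraph V) : Set V :=
  {v | IsCutVertex G v ∧ ∃ B : Set V, IsBlock G B ∧ v ∈ B ∧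
    ∀ u ∈ B, IsCutVertex G u → u = v}

/-- `D₂`: the cut-vertices having at least two neighbors which are not cut-vertices and
belong to different blocks of `G`. -/
def D2set (G : SimpleGraph V) : Set V :=
  {v | IsCutVertex G v ∧ ∃ x y : V, x ≠ y ∧ G.Adj v x ∧ G.Adj v y ∧
    ¬ IsCutVertex G x ∧ ¬ IsCutVertex G y ∧
    ∃ Bx By : Set V, IsBlock G Bx ∧ IsBlock G By ∧ x ∈ Bx ∧ y ∈ By ∧ Bx ≠ By}

/-! In a block graph, a vertex `v` that is not a cut-vertex has a complete closed neighbourhood: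
two neighbours of `v` are joined by a path avoiding `v`, which closes a cycle through `v`, and a
cycle lies in a single (complete) block. So `N[v]` is the unique block through `v`; hence `M(v)` is
made of cut-vertices, and for a cut-vertex `v` the set `D(v)` is the set of non-cut neighbours of
`v`, while a cut-vertex has a neighbour outside the closed neighbourhood of each of its neighbours.

A non-cut vertex `v` is not special: `D(v)` is empty, and `M(v)` empty would make `N[v]` closed
under adjacency, hence the whole graph and its only block. A cut-vertex `v` is not special exactly
when some block through `v` contains a second cut-vertex `u` and all non-cut neighbours of `v`
(then `u ∈ M(v)` and `D(v) ⊆ N(u)`), i.e. when `v ∉ D₁ ∪ D₂`. Finally a cut-vertex has no true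
twin, so the only `S(G)`-set is the set of special vertices. -/

def IsNonseparable (G : SimpleGraph V) (B : Set V) : Prop :=
  B.Nonempty ∧ (G.induce B).Connected ∧ NoCutVertexWithin G B

section General

variable {G : SimpleGraph V}

lemma mem_cnbr {u v : V} : u ∈ cnbr G v ↔ u = v ∨ G.Adj v u := Iff.rfl

lemma self_mem_cnbr (v : V) : v ∈ cnbr G v := mem_cnbr.2 (Or.inl rfl)

lemma mem_cnbr_of_adj {u v : V} (h : G.Adj v u) : u ∈ cnbr G v := mem_cnbr.2 (Or.inr h)

lemma subset_cnbr_of_isClique {s : Set V} (hs : G.IsClique s) {v : V} (hv : v ∈ s) :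
    s ⊆ cnbr G v := by
  intro u hu
  by_cases huv : u = v
  · exact mem_cnbr.2 (Or.inl huv)
  · exact mem_cnbr_of_adj (hs hv hu (Ne.symm huv))

lemma mem_of_adj_closed (hG : G.Preconnected) {T : Set V}
    (hT : ∀ y ∈ T, ∀ z, G.Adj y z → z ∈ T) {c : V} (hc : c ∈ T) (z : V) : z ∈ T := by
  obtain ⟨p⟩ := hG c z
  induction p with
  | nil => exact hc
  | cons h _ ih => exact ih (hT _ hc _ h)

lemma not_isCutVertex_of_forall_adj_reachable (hG : G.Preconnected) {u b : V} (hb : b ≠ u)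
    (h : ∀ w (hw : G.Adj u w), (G.induce {u}ᶜ).Reachable ⟨b, hb⟩ ⟨w, hw.ne'⟩) :
    ¬ IsCutVertex G u := by
  let T : Set V := {z | ∀ hz : z ≠ u, (G.induce {u}ᶜ).Reachable ⟨b, hb⟩ ⟨z, hz⟩}
  have hT : ∀ y ∈ T, ∀ z, G.Adj y z → z ∈ T := by
    intro y hy z hyz hz
    by_cases hyu : y = u
    · subst hyu
      exact h z hyz
    · exact (hy hyu).trans (Adj.reachable (hyz : (G.induce {u}ᶜ).Adj ⟨y, hyu⟩ ⟨z, hz⟩))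
  have hreach := mem_of_adj_closed hG hT (c := b) fun _ => Reachable.refl _
  exact fun hcut => hcut fun x y => (hreach x x.2).symm.trans (hreach y y.2)

lemma IsCutVertex.exists_adj (hG : G.Preconnected) {v : V} (hv : IsCutVertex G v) :
    ∃ u, G.Adj v u := by
  obtain ⟨x, hx⟩ : ∃ x, x ≠ v := by
    by_contra! h
    have : Subsingleton ({v}ᶜ : Set V) := ⟨fun a _ => absurd (h a) a.2⟩
    exact hv Preconnected.of_subsingleton
  obtain ⟨p⟩ := hG v x
  cases p with
  | nil => exact absurd rfl hx
  | cons h _ => exact ⟨_, h⟩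

lemma IsCutVertex.exists_adj_not_mem_cnbr (hG : G.Preconnected) {u v : V}
    (hu : IsCutVertex G u) (huv : G.Adj u v) : ∃ w, G.Adj u w ∧ w ∉ cnbr G v := by
  by_contra! h
  refine not_isCutVertex_of_forall_adj_reachable hG huv.ne' (fun w huw => ?_) hu
  rcases mem_cnbr.1 (h w huw) with rfl | hvw
  · rfl
  · exact Adj.reachable (hvw : (G.induce {u}ᶜ).Adj ⟨v, huv.ne'⟩ ⟨w, huw.ne'⟩)

lemma IsCutVertex.mem_Mset (hG : G.Preconnected) {u v : V} (hu : IsCutVertex G u)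
    (hvu : G.Adj v u) : u ∈ Mset G v :=
  ⟨hvu, hu.exists_adj_not_mem_cnbr hG hvu.symm⟩

lemma IsCutVertex.cnbr_ne (hG : G.Preconnected) {u v : V} (hv : IsCutVertex G v)
    (hvu : G.Adj v u) : cnbr G u ≠ cnbr G v := fun h => by
  obtain ⟨w, hvw, hw⟩ := hv.exists_adj_not_mem_cnbr hG hvu
  exact hw (h ▸ mem_cnbr_of_adj hvw)

lemma IsCutVertex.eq_of_mem_Tset (hG : G.Preconnected) {u v : V} (hv : IsCutVertex G v)
    (hu : u ∈ Tset G v) : u = v := by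
  by_contra huv
  have huN : u ∈ cnbr G v := (hu : cnbr G u = cnbr G v) ▸ self_mem_cnbr u
  have hvu : G.Adj v u := (mem_cnbr.1 huN).resolve_left huv
  exact hv.cnbr_ne hG hvu hu

lemma not_isCutVertex_of_mem_Dset (hG : G.Preconnected) {u v : V} (hu : u ∈ Dset G v) :
    ¬ IsCutVertex G u := fun hcut => by
  obtain ⟨w, huw, hw⟩ := hcut.exists_adj_not_mem_cnbr hG hu.1.symm
  exact hw (hu.2.2 (mem_cnbr_of_adj huw))

lemma exists_isPath_not_mem_support {v x y : V} (hv : ¬ IsCutVertex G v) (hx : x ≠ v)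
    (hy : y ≠ v) : ∃ p : G.Walk x y, p.IsPath ∧ v ∉ p.support := by
  classical
  obtain ⟨q⟩ := not_not.1 hv ⟨x, hx⟩ ⟨y, hy⟩
  have hvq : v ∉ (q.bypass.map (Embedding.induce (G := G) {v}ᶜ).toHom).support := by
    rw [Walk.support_map, List.mem_map]
    rintro ⟨z, -, hz⟩
    exact z.2 hz
  exact ⟨_, q.bypass_isPath.map (Embedding.induce (G := G) {v}ᶜ).injective, hvq⟩

lemma _root_.SimpleGraph.Walk.IsPath.exists_walk_avoiding {a b x w : V} {p : G.Walk a b}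
    (hp : p.IsPath) (hw : w ∈ p.support) (hwx : w ≠ x) :
    ∃ c, (c = a ∨ c = b) ∧ ∃ q : G.Walk w c, q.support ⊆ p.support ∧ x ∉ q.support := by
  classical
  induction p with
  | nil =>
    obtain rfl := List.mem_singleton.1 hw
    exact ⟨w, Or.inl rfl, Walk.nil, by simp, by simpa using hwx.symm⟩
  | @cons a c b hac q ih =>
    rw [Walk.cons_isPath_iff] at hp
    rcases List.mem_cons.1 hw with rfl | hwq
    · exact ⟨w, Or.inl rfl, Walk.nil, by simp, by simpa using hwx.symm⟩
    by_cases hxa : x = a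
    · subst hxa
      have hsub := q.support_dropUntil_subset_support hwq
      exact ⟨b, Or.inr rfl, q.dropUntil w hwq, fun y hy => List.mem_cons_of_mem _ (hsub hy),
        fun h => hp.2 (hsub h)⟩
    obtain ⟨d, hd, r, hrq, hxr⟩ := ih hp.1 hwq
    rcases hd with rfl | rfl
    · refine ⟨a, Or.inl rfl, r.concat hac.symm, ?_, ?_⟩
      · rw [Walk.support_concat, Walk.support_cons]
        exact List.append_subset.2 ⟨fun y hy => List.mem_cons_of_mem _ (hrq hy), by simp⟩
      · simp [hxr, hxa]
    · exact ⟨_, Or.inr rfl, r, fun y hy => List.mem_cons_of_mem _ (hrq hy), hxr⟩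

lemma isNonseparable_of_isClique {s : Set V} (hs : G.IsClique s) (hne : s.Nonempty) :
    IsNonseparable G s := by
  have hconn : ∀ t ⊆ s, t.Nonempty → (G.induce t).Connected := fun t hts ⟨x, hx⟩ => by
    have : Nonempty t := ⟨⟨x, hx⟩⟩
    rw [induce_eq_top.2 (hs.subset hts)]
    exact connected_top
  exact ⟨hne, hconn s subset_rfl hne, fun x _ hx => hconn _ Set.sdiff_subset hx⟩

lemma IsNonseparable.connected_diff_singleton {s : Set V} (h : IsNonseparable G s) {x : V}
    (hne : (s \ {x}).Nonempty) : (G.induce (s \ {x})).Connected := by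
  by_cases hx : x ∈ s
  · exact h.2.2 x hx hne
  · rw [Set.sdiff_singleton_eq_self hx]
    exact h.2.1

lemma IsNonseparable.union {s t : Set V} (hs : IsNonseparable G s) (ht : IsNonseparable G t)
    {u w : V} (huw : u ≠ w) (hu : u ∈ s ∩ t) (hw : w ∈ s ∩ t) : IsNonseparable G (s ∪ t) := by
  refine ⟨⟨u, Or.inl hu.1⟩,
    induce_union_connected hs.2.1.preconnected ht.2.1.preconnected ⟨u, hu⟩, fun x _ _ => ?_⟩
  obtain ⟨z, hzs, hzt⟩ : ∃ z, z ∈ s \ {x} ∧ z ∈ t \ {x} := by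
    by_cases hux : u = x
    · subst hux
      exact ⟨w, ⟨hw.1, huw.symm⟩, ⟨hw.2, huw.symm⟩⟩
    · exact ⟨u, ⟨hu.1, hux⟩, ⟨hu.2, hux⟩⟩
  rw [Set.union_sdiff_distrib]
  exact induce_union_connected (hs.connected_diff_singleton ⟨z, hzs⟩).preconnected
    (ht.connected_diff_singleton ⟨z, hzt⟩).preconnected ⟨z, hzs, hzt⟩

lemma isNonseparable_insert_support {v a b : V} {p : G.Walk a b} (hp : p.IsPath)
    (hv : v ∉ p.support) (ha : G.Adj v a) (hb : G.Adj v b) :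
    IsNonseparable G (insert v {x | x ∈ p.support}) := by
  have hdel : ∀ x, x ≠ v → (G.induce (insert v {y | y ∈ p.support} \ {x})).Connected := by
    intro x hxv
    refine induce_connected_of_patches v ⟨Set.mem_insert _ _, hxv.symm⟩ fun {w} hw => ?_
    obtain ⟨rfl | hwp, hwx⟩ := hw
    · exact ⟨{w}, Set.singleton_subset_iff.2 ⟨Set.mem_insert _ _, hxv.symm⟩, rfl, rfl, .refl _⟩
    obtain ⟨c, hc, q, hqp, hxq⟩ := hp.exists_walk_avoiding hwp hwx
    have hvc : G.Adj v c := by rcases hc with rfl | rfl <;> assumption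
    let r : G.Walk v w := (q.concat hvc.symm).reverse
    have hr : ∀ y ∈ r.support, y = v ∨ y ∈ q.support := by simp [r]
    refine ⟨{y | y ∈ r.support}, fun y hy => ?_, r.start_mem_support, r.end_mem_support,
      r.connected_induce_support.preconnected _ _⟩
    rcases hr y hy with rfl | hyq
    · exact ⟨Set.mem_insert _ _, hxv.symm⟩
    · exact ⟨Set.mem_insert_of_mem _ (hqp hyq), fun h => hxq (h ▸ hyq)⟩
  refine ⟨⟨v, Set.mem_insert _ _⟩, ?_, fun x _ _ => ?_⟩
  · rw [Set.insert_eq]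
    exact connected_induce_union Preconnected.of_subsingleton
      p.connected_induce_support.preconnected rfl p.start_mem_support ha
  · by_cases hxv : x = v
    · subst hxv
      rw [Set.insert_sdiff_self_of_notMem (s := {y | y ∈ p.support}) hv]
      exact p.connected_induce_support
    · exact hdel x hxv

lemma IsBlock.isNonseparable {B : Set V} (hB : IsBlock G B) : IsNonseparable G B := hB.1

lemma IsBlock.eq_of_subset {B C : Set V} (hB : IsBlock G B) (hC : IsNonseparable G C)
    (h : B ⊆ C) : B = C :=
  hB.2 C hC.1 hC.2.1 hC.2.2 h

lemma IsBlock.eq_of_two_mem {B C : Set V} (hB : IsBlock G B) (hC : IsBlock G C) {u v : V}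
    (huv : u ≠ v) (hu : u ∈ B ∩ C) (hv : v ∈ B ∩ C) : B = C :=
  have hBC := hB.isNonseparable.union hC.isNonseparable huv hu hv
  (hB.eq_of_subset hBC Set.subset_union_left).trans
    (hC.eq_of_subset hBC Set.subset_union_right).symm

lemma IsBlock.exists_ne_of_adj {B : Set V} (hB : IsBlock G B) {u v : V}
    (hvu : G.Adj v u) : ∃ y ∈ B, y ≠ v := by
  by_contra! h
  have hpair : IsNonseparable G {v, u} :=
    isNonseparable_of_isClique (isClique_pair.2 fun _ => hvu) ⟨v, Set.mem_insert _ _⟩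
  have huB : u ∈ B := (hB.eq_of_subset hpair fun y hy => Or.inl (h y hy)) ▸ Or.inr rfl
  exact hvu.ne' (h u huB)

lemma exists_isBlock_superset [Finite V] {s : Set V} (hs : IsNonseparable G s) :
    ∃ B, IsBlock G B ∧ s ⊆ B := by
  obtain ⟨B, hsB, hB⟩ := Finite.exists_le_maximal (p := IsNonseparable G) hs
  exact ⟨B, ⟨hB.prop, fun C h1 h2 h3 hBC => le_antisymm hBC (hB.2 ⟨h1, h2, h3⟩ hBC)⟩, hsB⟩

lemma exists_isBlock_mem [Finite V] (v : V) : ∃ B, IsBlock G B ∧ v ∈ B :=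
  let ⟨B, hB, hvB⟩ := exists_isBlock_superset (isNonseparable_of_isClique
    (G.isClique_singleton v) (Set.singleton_nonempty v))
  ⟨B, hB, hvB rfl⟩

end General

namespace IsBlockGraph

variable {G : SimpleGraph V} (hbg : IsBlockGraph G)
include hbg

lemma isClique {B : Set V} (hB : IsBlock G B) : G.IsClique B :=
  fun x hx y hy => hbg B hB x hx y hy

variable [Finite V]

lemma isClique_cnbr {v : V} (hv : ¬ IsCutVertex G v) : G.IsClique (cnbr G v) := by
  rintro x hx y hy hxy
  rcases mem_cnbr.1 hx with rfl | hvx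
  · exact (mem_cnbr.1 hy).resolve_left hxy.symm
  rcases mem_cnbr.1 hy with rfl | hvy
  · exact hvx.symm
  obtain ⟨p, hp, hvp⟩ := exists_isPath_not_mem_support hv hvx.ne' hvy.ne'
  obtain ⟨B, hB, hsub⟩ :=
    exists_isBlock_superset (isNonseparable_insert_support hp hvp hvx hvy)
  exact hbg.isClique hB (hsub (Or.inr p.start_mem_support)) (hsub (Or.inr p.end_mem_support)) hxy

lemma eq_cnbr_of_mem_isBlock {B : Set V} (hB : IsBlock G B) {v : V} (hv : ¬ IsCutVertex G v)
    (hvB : v ∈ B) : B = cnbr G v :=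
  hB.eq_of_subset (isNonseparable_of_isClique (hbg.isClique_cnbr hv) ⟨v, self_mem_cnbr v⟩)
    (subset_cnbr_of_isClique (hbg.isClique hB) hvB)

lemma isBlock_cnbr {v : V} (hv : ¬ IsCutVertex G v) : IsBlock G (cnbr G v) := by
  obtain ⟨B, hB, hvB⟩ := exists_isBlock_mem (G := G) v
  exact hbg.eq_cnbr_of_mem_isBlock hB hv hvB ▸ hB

lemma isCutVertex_of_mem_Mset {u v : V} (hu : u ∈ Mset G v) : IsCutVertex G u := by
  obtain ⟨hvu, w, huw, hw⟩ := hu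
  by_contra hnc
  exact hw (subset_cnbr_of_isClique (hbg.isClique_cnbr hnc) (mem_cnbr_of_adj hvu.symm)
    (mem_cnbr_of_adj huw))

lemma mem_Dset (hG : G.Preconnected) {u v : V} (hv : IsCutVertex G v) (hvu : G.Adj v u)
    (hu : ¬ IsCutVertex G u) : u ∈ Dset G v :=
  ⟨hvu, hv.cnbr_ne hG hvu,
    subset_cnbr_of_isClique (hbg.isClique_cnbr hu) (mem_cnbr_of_adj hvu.symm)⟩

lemma isCutVertex_of_special (hG : G.Preconnected)
    (h2b : ∃ B₁ B₂ : Set V, IsBlock G B₁ ∧ IsBlock G B₂ ∧ B₁ ≠ B₂) {v : V}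
    (hv : Special G v) : IsCutVertex G v := by
  by_contra hnc
  have hcl := hbg.isClique_cnbr hnc
  have hD : Dset G v ⊆ ∅ := fun u hu =>
    hu.2.1 (hu.2.2.antisymm (subset_cnbr_of_isClique hcl (mem_cnbr_of_adj hu.1)))
  have hclosed : ∀ y ∈ cnbr G v, ∀ z, G.Adj y z → z ∈ cnbr G v := by
    intro y hy z hyz
    rcases mem_cnbr.1 hy with rfl | hvy
    · exact mem_cnbr_of_adj hyz
    · by_contra hz
      exact hv.2 ⟨y, ⟨hvy, z, hyz, hz⟩, hD.trans (Set.empty_subset _)⟩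
  have hN := (hbg.isBlock_cnbr hnc).isNonseparable
  have hsub : ∀ B : Set V, B ⊆ cnbr G v := fun _ z _ =>
    mem_of_adj_closed hG hclosed (self_mem_cnbr v) z
  obtain ⟨B₁, B₂, hB₁, hB₂, hne⟩ := h2b
  exact hne ((hB₁.eq_of_subset hN (hsub B₁)).trans (hB₂.eq_of_subset hN (hsub B₂)).symm)

lemma special_of_mem_D1set (hG : G.Preconnected) {v : V} (hv : v ∈ D1set G) :
    Special G v := by
  obtain ⟨hcut, B, hB, hvB, huniq⟩ := hv
  obtain ⟨y, hyB, hyv⟩ := hB.exists_ne_of_adj (hcut.exists_adj hG).choose_spec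
  have hvy : G.Adj v y := hbg.isClique hB hvB hyB hyv.symm
  have hy : ¬ IsCutVertex G y := fun h => hyv (huniq y hyB h)
  refine ⟨⟨y, hvy⟩, fun ⟨u, huM, hD⟩ => ?_⟩
  have huy : G.Adj y u := (hD (hbg.mem_Dset hG hcut hvy hy)).symm
  have huB : u ∈ B := hbg.eq_cnbr_of_mem_isBlock hB hy hyB ▸ mem_cnbr_of_adj huy
  exact huM.1.ne (huniq u huB (hbg.isCutVertex_of_mem_Mset huM)).symm

lemma special_of_mem_D2set (hG : G.Preconnected) {v : V} (hv : v ∈ D2set G) :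
    Special G v := by
  obtain ⟨hcut, x, y, -, hvx, hvy, hx, hy, Bx, By, hBx, hBy, hxB, hyB, hne⟩ := hv
  refine ⟨⟨x, hvx⟩, fun ⟨u, huM, hD⟩ => hne ?_⟩
  have hux : G.Adj u x := hD (hbg.mem_Dset hG hcut hvx hx)
  have huy : G.Adj u y := hD (hbg.mem_Dset hG hcut hvy hy)
  rw [hbg.eq_cnbr_of_mem_isBlock hBx hx hxB, hbg.eq_cnbr_of_mem_isBlock hBy hy hyB]
  exact (hbg.isBlock_cnbr hx).eq_of_two_mem (hbg.isBlock_cnbr hy) huM.1.ne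
    ⟨mem_cnbr_of_adj hvx.symm, mem_cnbr_of_adj hvy.symm⟩
    ⟨mem_cnbr_of_adj hux.symm, mem_cnbr_of_adj huy.symm⟩

lemma exists_isBlock_forall_adj_not_isCutVertex_mem {v : V} (hcut : IsCutVertex G v)
    (hv : v ∉ D2set G) :
    ∃ B, IsBlock G B ∧ v ∈ B ∧ ∀ x, G.Adj v x → ¬ IsCutVertex G x → x ∈ B := by
  by_cases hex : ∃ x₀, G.Adj v x₀ ∧ ¬ IsCutVertex G x₀
  · obtain ⟨x₀, hvx₀, hx₀⟩ := hex
    refine ⟨cnbr G x₀, hbg.isBlock_cnbr hx₀, mem_cnbr_of_adj hvx₀.symm, fun x hvx hx => ?_⟩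
    by_contra hxB
    refine hv ⟨hcut, x₀, x, ?_, hvx₀, hvx, hx₀, hx, cnbr G x₀, cnbr G x, hbg.isBlock_cnbr hx₀,
      hbg.isBlock_cnbr hx, self_mem_cnbr x₀, self_mem_cnbr x, fun h => hxB (h ▸ self_mem_cnbr x)⟩
    rintro rfl
    exact hxB (self_mem_cnbr x₀)
  · obtain ⟨B, hB, hvB⟩ := exists_isBlock_mem (G := G) v
    exact ⟨B, hB, hvB, fun x hvx hx => (hex ⟨x, hvx, hx⟩).elim⟩

lemma mem_D1set_union_D2set_of_special (hG : G.Preconnected)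
    (h2b : ∃ B₁ B₂ : Set V, IsBlock G B₁ ∧ IsBlock G B₂ ∧ B₁ ≠ B₂) {v : V}
    (hv : Special G v) : v ∈ D1set G ∪ D2set G := by
  have hcut := hbg.isCutVertex_of_special hG h2b hv
  by_contra hnot
  rw [Set.mem_union, not_or] at hnot
  obtain ⟨B, hB, hvB, hDB⟩ := hbg.exists_isBlock_forall_adj_not_isCutVertex_mem hcut hnot.2
  obtain ⟨u, huB, hu, huv⟩ : ∃ u ∈ B, IsCutVertex G u ∧ u ≠ v := by
    by_contra! h
    exact hnot.1 ⟨hcut, B, hB, hvB, h⟩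
  have hvu : G.Adj v u := hbg.isClique hB hvB huB huv.symm
  refine hv.2 ⟨u, hu.mem_Mset hG hvu, fun x hx => ?_⟩
  have hxc := not_isCutVertex_of_mem_Dset hG hx
  exact hbg.isClique hB huB (hDB x hx.1 hxc) fun h => hxc (h ▸ hu)

end IsBlockGraph

lemma isSGSet_iff_eq_setOf_special {G : SimpleGraph V}
    (htwin : ∀ v, Special G v → ∀ u ∈ Tset G v, u = v) {S : Set V} :
    IsSGSet G S ↔ S = {v | Special G v} := by
  refine ⟨fun hS => Set.Subset.antisymm hS.1 fun v hv => ?_, ?_⟩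
  · obtain ⟨u, ⟨huS, huv⟩, -⟩ := hS.2 v hv
    exact htwin v hv u huv ▸ huS
  · rintro rfl
    exact ⟨fun _ => id, fun v hv => ⟨v, ⟨hv, rfl⟩, fun u hu => htwin v hv u hu.2⟩⟩

/-- In a connected block graph `G` with at least two blocks, the set of special vertices is
exactly `D₁ ∪ D₂`, no special vertex has a true twin other than itself, and `D₁ ∪ D₂` is the
unique `S(G)`-set of `G`. -/
theorem stmt13 {V : Type*} [Fintype V] (G : SimpleGraph V) (hconn : G.Connected)
    (hbg : IsBlockGraph G)
    (h2b : ∃ B₁ B₂ : Set V, IsBlock G B₁ ∧ IsBlock G B₂ ∧ B₁ ≠ B₂) :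
    ({v | Special G v} = D1set G ∪ D2set G) ∧
      (∀ v, Special G v → ∀ u ∈ Tset G v, u = v) ∧
      IsSGSet G (D1set G ∪ D2set G) ∧
      ∀ S : Set V, IsSGSet G S → S = D1set G ∪ D2set G := by
  have hG := hconn.preconnected
  have hspecial : {v | Special G v} = D1set G ∪ D2set G := by
    ext v
    refine ⟨hbg.mem_D1set_union_D2set_of_special hG h2b, ?_⟩
    rintro (hv | hv)
    · exact hbg.special_of_mem_D1set hG hv
    · exact hbg.special_of_mem_D2set hG hv
  have htwin : ∀ v, Special G v → ∀ u ∈ Tset G v, u = v := fun v hv _ hu =>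
    (hbg.isCutVertex_of_special hG h2b hv).eq_of_mem_Tset hG hu
  refine ⟨hspecial, htwin, (isSGSet_iff_eq_setOf_special htwin).2 hspecial.symm,
    fun S hS => ?_⟩
  rw [(isSGSet_iff_eq_setOf_special htwin).1 hS, hspecial]

end TotalDom
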